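/- Suppose S is purely imaginary, Ω₋ and Ω₊ are purely imaginary, and C₋ and C₊ have real entries. Then for every s ∈ ℂ with sI_{2n} − A invertible, the transfer matrix is block off-diagonal: G_qq[s] = 0 and G_pp[s] = 0, i.e., quantum BAE measurements of q_out with respect to q_in and of p_out with respect to p_in are realized. -/
import Mathlib


open Matrix

noncomputable section

namespace LQS

/-- Entrywise real part, as a complex matrix. -/
def matRe {k l : ℕ} (X : Matrix (Fin k) (Fin l) ℂ) : Matrix (Fin k) (Fin l) ℂ :=
  fun i j => ((X i j).re : ℂ)

/-- Entrywise imaginary part, as a complex matrix. -/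
def matIm {k l : ℕ} (X : Matrix (Fin k) (Fin l) ℂ) : Matrix (Fin k) (Fin l) ℂ :=
  fun i j => ((X i j).im : ℂ)

/-- A complex matrix has real entries. -/
def isReal {k l : ℕ} (X : Matrix (Fin k) (Fin l) ℂ) : Prop := ∀ i j, (X i j).im = 0

/-- A complex matrix is purely imaginary (every entry has zero real part). -/
def isPurelyImag {k l : ℕ} (X : Matrix (Fin k) (Fin l) ℂ) : Prop := ∀ i j, (X i j).re = 0

/-- The symplectic matrix J_k = [[0, I],[−I, 0]]. -/
def Jmat (k : ℕ) : Matrix (Fin k ⊕ Fin k) (Fin k ⊕ Fin k) ℂ :=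
  fromBlocks 0 1 (-1) 0

/-- D = [[Re S, −Im S],[Im S, Re S]]. -/
def quadD {m : ℕ} (S : Matrix (Fin m) (Fin m) ℂ) :
    Matrix (Fin m ⊕ Fin m) (Fin m ⊕ Fin m) ℂ :=
  fromBlocks (matRe S) (-(matIm S)) (matIm S) (matRe S)

/-- C = [[Re(C₋+C₊), −Im(C₋−C₊)],[Im(C₋+C₊), Re(C₋−C₊)]]. -/
def quadC {m n : ℕ} (Cm Cp : Matrix (Fin m) (Fin n) ℂ) :
    Matrix (Fin m ⊕ Fin m) (Fin n ⊕ Fin n) ℂ :=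
  fromBlocks (matRe (Cm + Cp)) (-(matIm (Cm - Cp))) (matIm (Cm + Cp)) (matRe (Cm - Cp))

/-- B = −[[Re((C₋−C₊)†), −Im((C₋−C₊)†)],[Im((C₋+C₊)†), Re((C₋+C₊)†)]]·D. -/
def quadB {m n : ℕ} (S : Matrix (Fin m) (Fin m) ℂ) (Cm Cp : Matrix (Fin m) (Fin n) ℂ) :
    Matrix (Fin n ⊕ Fin n) (Fin m ⊕ Fin m) ℂ :=
  -(fromBlocks (matRe (Cm - Cp)ᴴ) (-(matIm (Cm - Cp)ᴴ))
      (matIm (Cm + Cp)ᴴ) (matRe (Cm + Cp)ᴴ)) * quadD S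

/-- JH = [[Im(Ω₋+Ω₊), Re(Ω₋−Ω₊)],[−Re(Ω₋+Ω₊), Im(Ω₋−Ω₊)]]. -/
def quadJH {n : ℕ} (Om Op : Matrix (Fin n) (Fin n) ℂ) :
    Matrix (Fin n ⊕ Fin n) (Fin n ⊕ Fin n) ℂ :=
  fromBlocks (matIm (Om + Op)) (matRe (Om - Op)) (-(matRe (Om + Op))) (matIm (Om - Op))

/-- C♯ = −J_n·Cᵀ·J_m. -/
def quadCsharp {m n : ℕ} (Cm Cp : Matrix (Fin m) (Fin n) ℂ) :
    Matrix (Fin n ⊕ Fin n) (Fin m ⊕ Fin m) ℂ :=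
  -(Jmat n) * (quadC Cm Cp)ᵀ * (Jmat m)

/-- A = JH − (1/2)·C♯·C. -/
def quadA {m n : ℕ} (Cm Cp : Matrix (Fin m) (Fin n) ℂ) (Om Op : Matrix (Fin n) (Fin n) ℂ) :
    Matrix (Fin n ⊕ Fin n) (Fin n ⊕ Fin n) ℂ :=
  quadJH Om Op - (1/2 : ℂ) • (quadCsharp Cm Cp * quadC Cm Cp)

/-- Transfer matrix G[s] = D + C(sI − A)⁻¹B. -/
def transferG {m n : ℕ} (S : Matrix (Fin m) (Fin m) ℂ) (Cm Cp : Matrix (Fin m) (Fin n) ℂ)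
    (Om Op : Matrix (Fin n) (Fin n) ℂ) (s : ℂ) :
    Matrix (Fin m ⊕ Fin m) (Fin m ⊕ Fin m) ℂ :=
  quadD S + quadC Cm Cp *
    (s • (1 : Matrix (Fin n ⊕ Fin n) (Fin n ⊕ Fin n) ℂ) - quadA Cm Cp Om Op)⁻¹ *
    quadB S Cm Cp

end LQS

open LQS Matrix

section Aux

/-- The sign matrix diag(1, -1). -/
def Tmat (k : ℕ) : Matrix (Fin k ⊕ Fin k) (Fin k ⊕ Fin k) ℂ :=
  fromBlocks 1 0 0 (-1)

lemma Tmat_mul_Tmat (k : ℕ) : Tmat k * Tmat k = 1 := by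
  simp [Tmat, fromBlocks_multiply, ← fromBlocks_one]

lemma Tconj_fromBlocks {k l : ℕ} (a b c d : Matrix (Fin k) (Fin l) ℂ) :
    Tmat k * fromBlocks a b c d * Tmat l = fromBlocks a (-b) (-c) d := by
  simp [Tmat, fromBlocks_multiply, Matrix.mul_neg, Matrix.neg_mul]

lemma Tconj_diag {k l : ℕ} (a d : Matrix (Fin k) (Fin l) ℂ) :
    Tmat k * fromBlocks a 0 0 d * Tmat l = fromBlocks a 0 0 d := by
  rw [Tconj_fromBlocks]; simp

lemma Tconj_off {k l : ℕ} (b c : Matrix (Fin k) (Fin l) ℂ) :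
    Tmat k * fromBlocks 0 b c 0 * Tmat l = -(fromBlocks 0 b c 0) := by
  rw [Tconj_fromBlocks, fromBlocks_neg]; simp

lemma conj_split {k l p : ℕ} (X : Matrix (Fin k ⊕ Fin k) (Fin l ⊕ Fin l) ℂ)
    (Y : Matrix (Fin l ⊕ Fin l) (Fin p ⊕ Fin p) ℂ) :
    Tmat k * (X * Y) * Tmat p = (Tmat k * X * Tmat l) * (Tmat l * Y * Tmat p) := by
  have h : Tmat l * (Tmat l * (Y * Tmat p)) = Y * Tmat p := by
    rw [← Matrix.mul_assoc, Tmat_mul_Tmat, Matrix.one_mul]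
  simp only [Matrix.mul_assoc, h]

end Aux


/-- With purely imaginary S, purely imaginary Ω₋, Ω₊ and real C₋, C₊:
G_qq[s] = 0 and G_pp[s] = 0 (block off-diagonal transfer matrix). -/
theorem stmt_3 {m n : ℕ} (hm : 1 ≤ m) (hn : 1 ≤ n)
    (S : Matrix (Fin m) (Fin m) ℂ) (Cm Cp : Matrix (Fin m) (Fin n) ℂ)
    (Om Op : Matrix (Fin n) (Fin n) ℂ)
    (hS : S ∈ Matrix.unitaryGroup (Fin m) ℂ)
    (hOmH : Omᴴ = Om) (hOpS : Opᵀ = Op)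
    (hSim : isPurelyImag S) (hCmre : isReal Cm) (hCpre : isReal Cp)
    (hOmim : isPurelyImag Om) (hOpim : isPurelyImag Op) :
    ∀ s : ℂ,
      IsUnit (s • (1 : Matrix (Fin n ⊕ Fin n) (Fin n ⊕ Fin n) ℂ) - quadA Cm Cp Om Op) →
      (transferG S Cm Cp Om Op s).toBlocks₁₁ = 0 ∧
      (transferG S Cm Cp Om Op s).toBlocks₂₂ = 0 := by
  intro s _
  set G := transferG S Cm Cp Om Op s with hGdef
  -- entrywise facts
  have hReS : matRe S = 0 := by ext i j; simp [matRe, hSim i j]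
  have hImCa : matIm (Cm + Cp) = 0 := by
    ext i j; simp [matIm, Matrix.add_apply, hCmre i j, hCpre i j]
  have hImCs : matIm (Cm - Cp) = 0 := by
    ext i j; simp [matIm, Matrix.sub_apply, hCmre i j, hCpre i j]
  have hImCaH : matIm (Cm + Cp)ᴴ = 0 := by
    ext i j; simp [matIm, Matrix.conjTranspose_apply, hCmre j i, hCpre j i]
  have hImCsH : matIm (Cm - Cp)ᴴ = 0 := by
    ext i j; simp [matIm, Matrix.conjTranspose_apply, hCmre j i, hCpre j i]
  have hReOa : matRe (Om + Op) = 0 := by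
    ext i j; simp [matRe, Matrix.add_apply, hOmim i j, hOpim i j]
  have hReOs : matRe (Om - Op) = 0 := by
    ext i j; simp [matRe, Matrix.sub_apply, hOmim i j, hOpim i j]
  -- block shapes
  have hD : quadD S = fromBlocks 0 (-(matIm S)) (matIm S) 0 := by
    simp only [quadD, hReS]
  have hDT : Tmat m * quadD S * Tmat m = -(quadD S) := by
    rw [hD]; exact Tconj_off _ _
  have hC : quadC Cm Cp = fromBlocks (matRe (Cm + Cp)) 0 0 (matRe (Cm - Cp)) := by
    simp only [quadC, hImCa, hImCs, neg_zero]
  have hCT : Tmat m * quadC Cm Cp * Tmat n = quadC Cm Cp := by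
    rw [hC]; exact Tconj_diag _ _
  have hB : quadB S Cm Cp
      = -(fromBlocks (matRe (Cm - Cp)ᴴ) 0 0 (matRe (Cm + Cp)ᴴ) * quadD S) := by
    simp only [quadB, hImCaH, hImCsH, neg_zero, Matrix.neg_mul]
  have hBT : Tmat n * quadB S Cm Cp * Tmat m = -(quadB S Cm Cp) := by
    rw [hB, Matrix.mul_neg, Matrix.neg_mul, conj_split, Tconj_diag, hDT,
      Matrix.mul_neg, neg_neg]
  have hJH : quadJH Om Op = fromBlocks (matIm (Om + Op)) 0 0 (matIm (Om - Op)) := by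
    simp only [quadJH, hReOa, hReOs, neg_zero]
  have hJHT : Tmat n * quadJH Om Op * Tmat n = quadJH Om Op := by
    rw [hJH]; exact Tconj_diag _ _
  have hCsh : quadCsharp Cm Cp
      = fromBlocks (matRe (Cm - Cp))ᵀ 0 0 (matRe (Cm + Cp))ᵀ := by
    simp only [quadCsharp, hC, Jmat, fromBlocks_transpose, Matrix.transpose_zero]
    simp [fromBlocks_multiply, fromBlocks_neg, Matrix.neg_mul, Matrix.mul_neg]
  have hCshT : Tmat n * quadCsharp Cm Cp * Tmat m = quadCsharp Cm Cp := by
    rw [hCsh]; exact Tconj_diag _ _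
  have hAT : Tmat n * quadA Cm Cp Om Op * Tmat n = quadA Cm Cp Om Op := by
    simp only [quadA, Matrix.mul_sub, Matrix.sub_mul, Matrix.mul_smul, Matrix.smul_mul]
    rw [conj_split, hCshT, hCT, hJHT]
  set M := s • (1 : Matrix (Fin n ⊕ Fin n) (Fin n ⊕ Fin n) ℂ) - quadA Cm Cp Om Op with hMdef
  have hMT : Tmat n * M * Tmat n = M := by
    rw [hMdef, Matrix.mul_sub, Matrix.sub_mul, Matrix.mul_smul, Matrix.mul_one,
      Matrix.smul_mul, Tmat_mul_Tmat, hAT]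
  have hTinv : (Tmat n)⁻¹ = Tmat n := inv_eq_right_inv (Tmat_mul_Tmat n)
  have hInvT : Tmat n * M⁻¹ * Tmat n = M⁻¹ := by
    have h1 : M⁻¹ = Tmat n * M⁻¹ * Tmat n := by
      conv_lhs => rw [← hMT]
      rw [Matrix.mul_inv_rev, Matrix.mul_inv_rev, hTinv, Matrix.mul_assoc]
    exact h1.symm
  have hGT : Tmat m * G * Tmat m = -G := by
    rw [hGdef]
    show Tmat m * (quadD S + quadC Cm Cp * M⁻¹ * quadB S Cm Cp) * Tmat m = _
    rw [Matrix.mul_add, Matrix.add_mul, hDT, conj_split, conj_split, hCT, hInvT, hBT,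
      Matrix.mul_neg, ← neg_add]
    rfl
  -- extract the diagonal blocks
  rw [← fromBlocks_toBlocks G, Tconj_fromBlocks, fromBlocks_neg] at hGT
  have h11 : G.toBlocks₁₁ = -(G.toBlocks₁₁) := by
    have := congrArg Matrix.toBlocks₁₁ hGT
    simpa [toBlocks_fromBlocks₁₁] using this
  have h22 : G.toBlocks₂₂ = -(G.toBlocks₂₂) := by
    have := congrArg Matrix.toBlocks₂₂ hGT
    simpa [toBlocks_fromBlocks₂₂] using this
  constructor
  · ext i j
    have h := congrFun (congrFun h11 i) j
    simp only [Matrix.neg_apply] at h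
    simpa using (by linear_combination h / 2 : G.toBlocks₁₁ i j = 0)
  · ext i j
    have h := congrFun (congrFun h22 i) j
    simp only [Matrix.neg_apply] at h
    simpa using (by linear_combination h / 2 : G.toBlocks₂₂ i j = 0)
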